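/- arXiv:2002.10721 — 3 statements merged into one kernel-verified Lean document; each statement's English description precedes it below -/
import Mathlib

section
/- Let F ⊂ ℝⁿ be a d-set with 0 < d ≤ n, i.e. there exists a Borel measure μ with support F and constants c₁, c₂ > 0 such that c₁ r^d ≤ μ(closure of B(x,r)) ≤ c₂ r^d for all x ∈ F and 0 < r ≤ 1. Then the d-dimensional Hausdorff measure restricted to F also satisfies: there exist constants C₁, C₂ > 0 with C₁ r^d ≤ H^d(F ∩ closure of B(x,r)) ≤ C₂ r^d for all x ∈ F and 0 < r ≤ 1. In particular any two d-measures on the same d-set F are mutually equivalent (each bounded above and below by constant multiples of the other on balls). -/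
/-!
Lower bound: by the upper density bound, `μ s ≤ c₂ (diam s)^d` for every set `s` of diameter at
most `1` (if `s` meets `F` at `y` then `s ⊆ B(y, diam s)`, and `μ` has no atoms), so
`μ / c₂ ≤ H^d` by the mass distribution principle, while `μ (F ∩ B(x,r)) = μ (B(x,r)) ≥ c₁ r^d`.

Upper bound: a maximal `ε`-separated subset of `F ∩ B(x,r)` yields a cover by balls of diameter
`2ε`, and the disjoint balls of radius `ε/2` around its points each carry mass `≥ c₁ (ε/4)^d`
inside `B(x,2r)`. Hence `F ∩ B(x,r)` is covered by `≲ μ (B(x,2r)) / ε^d ≲ (r/ε)^d` sets of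
diameter `2ε`, so `H^d (F ∩ B(x,r)) ≲ r^d`. Since `2r` may exceed `1`, the bound
`μ (B(x,2r)) ≲ r^d` comes from covering `B(x,2r)` by a fixed number of balls of radius `r/2`.

Two `d`-measures on `F` are comparable because both are comparable to `r^d`.
-/

open MeasureTheory Metric

/-- A `d`-measure on a `d`-set `F ⊆ ℝⁿ`. -/
def IsDMeasure (n : ℕ) (d : ℝ) (F : Set (EuclideanSpace ℝ (Fin n)))
    (μ : Measure (EuclideanSpace ℝ (Fin n))) (c₁ c₂ : ℝ) : Prop :=
  0 < c₁ ∧ 0 < c₂ ∧ μ Fᶜ = 0 ∧ (∀ x ∈ F, ∀ r : ℝ, 0 < r → 0 < μ (ball x r)) ∧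
    ∀ x ∈ F, ∀ r : ℝ, 0 < r → r ≤ 1 →
      ENNReal.ofReal (c₁ * r ^ d) ≤ μ (closedBall x r) ∧
        μ (closedBall x r) ≤ ENNReal.ofReal (c₂ * r ^ d)

open Filter Topology Function
open scoped ENNReal NNReal

theorem exists_finset_closedBall_subset_iUnion_ball {E : Type*} [NormedAddCommGroup E]
    [NormedSpace ℝ E] [ProperSpace E] {ρ : ℝ} (hρ : 0 < ρ) :
    ∃ t : Finset E, ∀ (x : E) (R : ℝ), 0 < R →
      closedBall x R ⊆ ⋃ y ∈ t, ball (x + R • y) (ρ * R) := by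
  obtain ⟨t, -, ht, hcov⟩ := (isCompact_closedBall (0 : E) 1).finite_cover_balls hρ
  refine ⟨ht.toFinset, fun x R hR z hz => ?_⟩
  have hw : R⁻¹ • (z - x) ∈ closedBall (0 : E) 1 := by
    rw [mem_closedBall_zero_iff, norm_smul, norm_inv, Real.norm_of_nonneg hR.le,
      inv_mul_le_iff₀ hR, mul_one, ← dist_eq_norm]
    exact hz
  obtain ⟨y, hy, hwy⟩ := Set.mem_iUnion₂.1 (hcov hw)
  refine Set.mem_iUnion₂.2 ⟨y, ht.mem_toFinset.2 hy, ?_⟩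
  have hzy : z - (x + R • y) = R • (R⁻¹ • (z - x) - y) := by
    rw [smul_sub, smul_inv_smul₀ hR.ne']; abel
  rw [mem_ball, dist_eq_norm, hzy, norm_smul, Real.norm_of_nonneg hR.le, mul_comm ρ]
  exact mul_lt_mul_of_pos_left (by rwa [← dist_eq_norm]) hR

section Packing

variable {X : Type*} [PseudoMetricSpace X] [MeasurableSpace X] [OpensMeasurableSpace X]

theorem Metric.IsSeparated.encard_mul_le_measure (μ : Measure X) {ε : ℝ≥0} {C U : Set X}
    {a : ℝ≥0∞} (hC : IsSeparated ε C) (ha : ∀ y ∈ C, a ≤ μ (ball y (ε / 2)))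
    (hU : ∀ y ∈ C, ball y (ε / 2) ⊆ U) : (C.encard : ℝ≥0∞) * a ≤ μ U := by
  have hdisj : Pairwise (Disjoint on fun y : C => ball (y : X) (ε / 2)) := by
    intro y z hyz
    have hsep : (ε : ℝ≥0∞) < edist (y : X) z := hC y.2 z.2 (Subtype.coe_injective.ne hyz)
    rw [edist_nndist, ENNReal.coe_lt_coe, ← NNReal.coe_lt_coe, coe_nndist] at hsep
    exact ball_disjoint_ball (by linarith)
  calc (C.encard : ℝ≥0∞) * a = ∑' _ : C, a := (ENNReal.tsum_const a).symm
    _ ≤ ∑' y : C, μ (ball (y : X) (ε / 2)) := ENNReal.tsum_le_tsum fun y => ha y y.2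
    _ ≤ μ (⋃ y : C, ball (y : X) (ε / 2)) :=
      tsum_meas_le_meas_iUnion_of_disjoint μ (fun _ => measurableSet_ball) hdisj
    _ ≤ μ U := measure_mono (Set.iUnion_subset fun y => hU y y.2)

theorem Metric.packingNumber_mul_le_measure (μ : Measure X) {ε : ℝ≥0} {A U : Set X}
    {a : ℝ≥0∞} (ha : ∀ y ∈ A, a ≤ μ (ball y (ε / 2)))
    (hU : ∀ y ∈ A, ball y (ε / 2) ⊆ U) : (packingNumber ε A : ℝ≥0∞) * a ≤ μ U := by
  simp only [packingNumber, ENat.toENNReal_iSup, ENNReal.iSup_mul, iSup_le_iff]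
  exact fun C hCA hC => hC.encard_mul_le_measure μ (fun y hy => ha y (hCA hy))
    (fun y hy => hU y (hCA hy))

end Packing

theorem MeasureTheory.Measure.inv_smul_le_hausdorffMeasure {X : Type*} [EMetricSpace X]
    [MeasurableSpace X] [BorelSpace X] {μ : Measure X} {d : ℝ} {c ε : ℝ≥0∞} (hc₀ : c ≠ 0)
    (hc : c ≠ ⊤) (hε : 0 < ε) (h : ∀ s, ediam s ≤ ε → μ s ≤ c * ediam s ^ d) : c⁻¹ • μ ≤ μH[d] :=
  Measure.le_hausdorffMeasure d _ ε hε fun s hs => by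
    rw [Measure.smul_apply, smul_eq_mul, ENNReal.inv_mul_le_iff hc₀ hc]
    exact h s hs

section Hausdorff

variable {X : Type*} [MetricSpace X] [MeasurableSpace X] [BorelSpace X]

theorem MeasureTheory.Measure.hausdorffMeasure_le_of_coveringNumber_mul_le {A : Set X} {d : ℝ}
    (hd : 0 ≤ d) {K : ℝ≥0∞} {ε₀ : ℝ≥0} (hε₀ : 0 < ε₀)
    (h : ∀ ε : ℝ≥0, 0 < ε → ε ≤ ε₀ → (coveringNumber ε A : ℝ≥0∞) * (2 * ε) ^ d ≤ K) :
    μH[d] A ≤ K := by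
  rcases eq_or_ne K ⊤ with rfl | hK
  · exact le_top
  have hev : ∀ᶠ ε in 𝓝[>] (0 : ℝ≥0), 0 < ε ∧ ε ≤ ε₀ := Ioc_mem_nhdsGT hε₀
  have hfin : ∀ ε : ℝ≥0, 0 < ε → ε ≤ ε₀ → coveringNumber ε A ≠ ⊤ := by
    intro ε hε hεε₀ htop
    have hpos : (2 * (ε : ℝ≥0∞)) ^ d ≠ 0 :=
      (ENNReal.rpow_pos (by simpa using hε) (by finiteness)).ne'
    have := h ε hε hεε₀
    rw [htop, ENat.toENNReal_top, ENNReal.top_mul hpos] at this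
    exact hK (top_le_iff.1 this)
  have hdiam : ∀ (ε : ℝ≥0) (y : X), ediam (closedBall y ε) ≤ 2 * ε := fun ε y => by
    rw [← closedEBall_coe]; exact ediam_closedEBall_le
  calc μH[d] A ≤ liminf (fun ε : ℝ≥0 =>
        ∑' y : minimalCover ε A, ediam (closedBall (y : X) ε) ^ d) (𝓝[>] 0) := by
        have : ∀ ε : ℝ≥0, Countable (minimalCover ε A) :=
          fun ε => finite_minimalCover.countable.to_subtype
        refine Measure.hausdorffMeasure_le_liminf_tsum d A (fun ε : ℝ≥0 => 2 * (ε : ℝ≥0∞)) ?_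
          (fun ε (y : minimalCover ε A) => closedBall (y : X) ε) ?_ ?_
        · have hc : Continuous fun ε : ℝ≥0 => 2 * (ε : ℝ≥0∞) :=
            (ENNReal.continuous_const_mul (by simp)).comp ENNReal.continuous_coe
          exact (hc.tendsto' 0 0 (by simp)).mono_left nhdsWithin_le_nhds
        · exact Eventually.of_forall fun ε y => hdiam ε y
        · filter_upwards [hev] with ε hε
          simpa only [Set.iUnion_coe_set] using
            (isCover_minimalCover (hfin ε hε.1 hε.2)).subset_iUnion_closedBall
    _ ≤ K := by
        refine liminf_le_of_frequently_le' (Eventually.frequently ?_)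
        filter_upwards [hev] with ε hε
        calc ∑' y : minimalCover ε A, ediam (closedBall (y : X) ε) ^ d
            ≤ ∑' _ : minimalCover ε A, (2 * (ε : ℝ≥0∞)) ^ d :=
              ENNReal.tsum_le_tsum fun y => ENNReal.rpow_le_rpow (hdiam ε y) hd
          _ = (coveringNumber ε A : ℝ≥0∞) * (2 * ε) ^ d := by
              rw [ENNReal.tsum_const, ← Set.encard, encard_minimalCover (hfin ε hε.1 hε.2)]
          _ ≤ K := h ε hε.1 hε.2

end Hausdorff

namespace IsDMeasure

variable {n : ℕ} {d : ℝ} {F : Set (EuclideanSpace ℝ (Fin n))}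
  {μ : Measure (EuclideanSpace ℝ (Fin n))} {c₁ c₂ : ℝ}

theorem lower_const_pos (hμ : IsDMeasure n d F μ c₁ c₂) : 0 < c₁ := hμ.1

theorem upper_const_pos (hμ : IsDMeasure n d F μ c₁ c₂) : 0 < c₂ := hμ.2.1

theorem measure_compl (hμ : IsDMeasure n d F μ c₁ c₂) : μ Fᶜ = 0 := hμ.2.2.1

theorem ofReal_le_measure_closedBall (hμ : IsDMeasure n d F μ c₁ c₂)
    {x : EuclideanSpace ℝ (Fin n)} (hx : x ∈ F) {r : ℝ} (hr : 0 < r) (hr1 : r ≤ 1) :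
    ENNReal.ofReal (c₁ * r ^ d) ≤ μ (closedBall x r) :=
  (hμ.2.2.2.2 x hx r hr hr1).1

theorem measure_closedBall_le_ofReal (hμ : IsDMeasure n d F μ c₁ c₂)
    {x : EuclideanSpace ℝ (Fin n)} (hx : x ∈ F) {r : ℝ} (hr : 0 < r) (hr1 : r ≤ 1) :
    μ (closedBall x r) ≤ ENNReal.ofReal (c₂ * r ^ d) :=
  (hμ.2.2.2.2 x hx r hr hr1).2

theorem measure_inter (hμ : IsDMeasure n d F μ c₁ c₂) (s : Set (EuclideanSpace ℝ (Fin n))) :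
    μ (F ∩ s) = μ s := by
  rw [Set.inter_comm]; exact measure_inter_conull hμ.measure_compl

theorem nullSingletonClass (hμ : IsDMeasure n d F μ c₁ c₂) (hd : 0 < d) :
    NullSingletonClass μ := by
  refine ⟨fun y => ?_⟩
  by_cases hy : y ∈ F
  swap
  · exact measure_mono_null (Set.singleton_subset_iff.2 hy) hμ.measure_compl
  have hlim : Tendsto (fun r : ℝ => ENNReal.ofReal (c₂ * r ^ d)) (𝓝[>] 0) (𝓝 0) := by
    have hc : Continuous fun r : ℝ => ENNReal.ofReal (c₂ * r ^ d) :=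
      ENNReal.continuous_ofReal.comp (continuous_const.mul (Real.continuous_rpow_const hd.le))
    simpa [Real.zero_rpow hd.ne'] using hc.tendsto 0 |>.mono_left nhdsWithin_le_nhds
  refine le_antisymm (ge_of_tendsto hlim ?_) zero_le
  filter_upwards [Ioc_mem_nhdsGT one_pos] with r hr
  exact (measure_mono (Set.singleton_subset_iff.2 (mem_closedBall_self hr.1.le))).trans
    (hμ.measure_closedBall_le_ofReal hy hr.1 hr.2)

theorem measure_le_ofReal_mul_ediam_rpow (hμ : IsDMeasure n d F μ c₁ c₂) (hd : 0 < d)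
    {s : Set (EuclideanSpace ℝ (Fin n))} (hs : ediam s ≤ 1) :
    μ s ≤ ENNReal.ofReal c₂ * ediam s ^ d := by
  rcases (s ∩ F).eq_empty_or_nonempty with hsF | ⟨y, hys, hyF⟩
  · have : s ⊆ Fᶜ := (Set.disjoint_iff_inter_eq_empty.2 hsF).subset_compl_right
    simp [measure_mono_null this hμ.measure_compl]
  rcases eq_or_ne (ediam s) 0 with h0 | h0
  · have := hμ.nullSingletonClass hd
    rw [(ediam_eq_zero_iff.1 h0).eq_singleton_of_mem hys, measure_singleton]
    exact zero_le
  set D : ℝ≥0 := (ediam s).toNNReal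
  have hD : (D : ℝ≥0∞) = ediam s := ENNReal.coe_toNNReal (ne_top_of_le_ne_top (by simp) hs)
  have hsub : s ⊆ closedBall y D := by
    rw [← closedEBall_coe, hD]
    exact fun z hz => edist_le_ediam_of_mem hz hys
  have hD0 : (0 : ℝ) < D := by
    rw [NNReal.coe_pos, ← ENNReal.coe_pos, hD]; exact pos_iff_ne_zero.2 h0
  have hD1 : (D : ℝ) ≤ 1 := by
    rw [← NNReal.coe_one, NNReal.coe_le_coe, ← ENNReal.coe_le_coe, hD]; exact mod_cast hs
  calc μ s ≤ μ (closedBall y D) := measure_mono hsub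
    _ ≤ ENNReal.ofReal (c₂ * (D : ℝ) ^ d) := hμ.measure_closedBall_le_ofReal hyF hD0 hD1
    _ = ENNReal.ofReal c₂ * ediam s ^ d := by
      rw [ENNReal.ofReal_mul hμ.upper_const_pos.le, ← NNReal.coe_rpow, ENNReal.ofReal_coe_nnreal,
        ENNReal.coe_rpow_of_nonneg _ hd.le, hD]

theorem le_hausdorffMeasure_inter_closedBall (hμ : IsDMeasure n d F μ c₁ c₂) (hd : 0 < d)
    {x : EuclideanSpace ℝ (Fin n)} (hx : x ∈ F) {r : ℝ} (hr : 0 < r) (hr1 : r ≤ 1) :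
    ENNReal.ofReal (c₁ / c₂ * r ^ d) ≤ μH[d] (F ∩ closedBall x r) := by
  have hc₂ := hμ.upper_const_pos
  have hmass : (ENNReal.ofReal c₂)⁻¹ • μ ≤ μH[d] :=
    Measure.inv_smul_le_hausdorffMeasure (by simpa using hc₂) ENNReal.ofReal_ne_top one_pos
      fun s hs => hμ.measure_le_ofReal_mul_ediam_rpow hd hs
  calc ENNReal.ofReal (c₁ / c₂ * r ^ d)
      = (ENNReal.ofReal c₂)⁻¹ * ENNReal.ofReal (c₁ * r ^ d) := by
        rw [div_mul_eq_mul_div, ENNReal.ofReal_div_of_pos hc₂, ENNReal.div_eq_inv_mul]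
    _ ≤ (ENNReal.ofReal c₂)⁻¹ * μ (F ∩ closedBall x r) := by
        rw [hμ.measure_inter]; gcongr; exact hμ.ofReal_le_measure_closedBall hx hr hr1
    _ ≤ μH[d] (F ∩ closedBall x r) := hmass _

theorem measure_inter_ball_le (hμ : IsDMeasure n d F μ c₁ c₂) (z : EuclideanSpace ℝ (Fin n))
    {ρ r : ℝ} (hr : 0 < r) (hr1 : r ≤ 1) (hρ : 2 * ρ ≤ r) :
    μ (F ∩ ball z ρ) ≤ ENNReal.ofReal (c₂ * r ^ d) := by
  rcases (F ∩ ball z ρ).eq_empty_or_nonempty with h | ⟨y, hyF, hyz⟩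
  · simp [h]
  refine (measure_mono fun w hw => ?_).trans (hμ.measure_closedBall_le_ofReal hyF hr hr1)
  rw [mem_closedBall]
  linarith [dist_triangle_right w y z, mem_ball.1 hw.2, mem_ball.1 hyz]

theorem exists_measure_closedBall_two_mul_le (hμ : IsDMeasure n d F μ c₁ c₂) :
    ∃ C > 0, ∀ (x : EuclideanSpace ℝ (Fin n)) (r : ℝ), 0 < r → r ≤ 1 →
      μ (closedBall x (2 * r)) ≤ ENNReal.ofReal (C * r ^ d) := by
  obtain ⟨t, ht⟩ := exists_finset_closedBall_subset_iUnion_ball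
    (E := EuclideanSpace ℝ (Fin n)) (ρ := 1 / 4) (by norm_num)
  have htne : t.Nonempty := by
    obtain ⟨y, hy, -⟩ := Set.mem_iUnion₂.1 (ht 0 1 one_pos (mem_closedBall_self zero_le_one))
    exact ⟨y, hy⟩
  refine ⟨t.card * c₂, by have := hμ.upper_const_pos; positivity, fun x r hr hr1 => ?_⟩
  calc μ (closedBall x (2 * r)) = μ (F ∩ closedBall x (2 * r)) := (hμ.measure_inter _).symm
    _ ≤ μ (⋃ y ∈ t, F ∩ ball (x + (2 * r) • y) (1 / 4 * (2 * r))) := by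
        rw [← Set.inter_iUnion₂]
        exact measure_mono (Set.inter_subset_inter_right _ (ht x _ (by positivity)))
    _ ≤ ∑ y ∈ t, μ (F ∩ ball (x + (2 * r) • y) (1 / 4 * (2 * r))) :=
        measure_biUnion_finset_le _ _
    _ ≤ ∑ _y ∈ t, ENNReal.ofReal (c₂ * r ^ d) :=
        Finset.sum_le_sum fun y _ => hμ.measure_inter_ball_le _ hr hr1 (by linarith)
    _ = ENNReal.ofReal (t.card * c₂ * r ^ d) := by
        rw [Finset.sum_const, nsmul_eq_mul, mul_assoc, ENNReal.ofReal_mul (Nat.cast_nonneg _),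
          ENNReal.ofReal_natCast]

theorem packingNumber_mul_le (hμ : IsDMeasure n d F μ c₁ c₂) (x : EuclideanSpace ℝ (Fin n))
    {r : ℝ} (hr1 : r ≤ 1) {ε : ℝ≥0} (hε : 0 < ε) (hεr : ε ≤ r) :
    (packingNumber ε (F ∩ closedBall x r) : ℝ≥0∞) * ENNReal.ofReal (c₁ * (ε / 4) ^ d) ≤
      μ (closedBall x (2 * r)) := by
  have hε' : (0 : ℝ) < ε := hε
  refine packingNumber_mul_le_measure μ (fun y hy => ?_) fun y hy w hw => ?_
  · refine (hμ.ofReal_le_measure_closedBall hy.1 (by positivity) (by linarith)).trans ?_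
    exact measure_mono (closedBall_subset_ball (by linarith))
  · rw [mem_closedBall]
    linarith [dist_triangle w y x, mem_ball.1 hw, mem_closedBall.1 hy.2]

theorem exists_hausdorffMeasure_inter_closedBall_le (hμ : IsDMeasure n d F μ c₁ c₂)
    (hd : 0 < d) :
    ∃ C > 0, ∀ (x : EuclideanSpace ℝ (Fin n)) (r : ℝ), 0 < r → r ≤ 1 →
      μH[d] (F ∩ closedBall x r) ≤ ENNReal.ofReal (C * r ^ d) := by
  obtain ⟨C, hC, hdouble⟩ := hμ.exists_measure_closedBall_two_mul_le
  have hc₁ := hμ.lower_const_pos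
  refine ⟨C * 8 ^ d / c₁, by positivity, fun x r hr hr1 => ?_⟩
  refine Measure.hausdorffMeasure_le_of_coveringNumber_mul_le hd.le (ε₀ := r.toNNReal)
    (by simpa) fun ε hε hεr => ?_
  rw [Real.le_toNNReal_iff_coe_le hr.le] at hεr
  have hscale : (2 * (ε : ℝ≥0∞)) ^ d =
      ENNReal.ofReal (c₁ * (ε / 4) ^ d) * ENNReal.ofReal (8 ^ d / c₁) := by
    have h8 : c₁ * ((ε : ℝ) / 4) ^ d * (8 ^ d / c₁) = (2 * ε) ^ d := by
      rw [mul_comm c₁, mul_assoc, mul_div_cancel₀ _ hc₁.ne', ← Real.mul_rpow (by positivity)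
        (by norm_num)]
      ring_nf
    rw [← ENNReal.ofReal_mul (by positivity), h8, ← ENNReal.ofReal_rpow_of_nonneg (by positivity)
      hd.le, ENNReal.ofReal_mul zero_le_two, ENNReal.ofReal_ofNat, ENNReal.ofReal_coe_nnreal]
  calc (coveringNumber ε (F ∩ closedBall x r) : ℝ≥0∞) * (2 * ε) ^ d
      ≤ (packingNumber ε (F ∩ closedBall x r) : ℝ≥0∞) * (2 * ε) ^ d := by
        gcongr; exact coveringNumber_le_packingNumber _ _
    _ ≤ μ (closedBall x (2 * r)) * ENNReal.ofReal (8 ^ d / c₁) := by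
        rw [hscale, ← mul_assoc]; gcongr; exact hμ.packingNumber_mul_le x hr1 hε hεr
    _ ≤ ENNReal.ofReal (C * r ^ d) * ENNReal.ofReal (8 ^ d / c₁) := by
        gcongr; exact hdouble x r hr hr1
    _ = ENNReal.ofReal (C * 8 ^ d / c₁ * r ^ d) := by
        rw [← ENNReal.ofReal_mul (by positivity)]; ring_nf

theorem measure_closedBall_le_ofReal_div_mul {ν : Measure (EuclideanSpace ℝ (Fin n))}
    {b₁ b₂ : ℝ} (hμ : IsDMeasure n d F μ c₁ c₂) (hν : IsDMeasure n d F ν b₁ b₂)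
    {x : EuclideanSpace ℝ (Fin n)} (hx : x ∈ F) {r : ℝ} (hr : 0 < r) (hr1 : r ≤ 1) :
    μ (closedBall x r) ≤ ENNReal.ofReal (c₂ / b₁) * ν (closedBall x r) := by
  have hb₁ := hν.lower_const_pos
  calc μ (closedBall x r) ≤ ENNReal.ofReal (c₂ * r ^ d) :=
        hμ.measure_closedBall_le_ofReal hx hr hr1
    _ = ENNReal.ofReal (c₂ / b₁) * ENNReal.ofReal (b₁ * r ^ d) := by
        rw [← ENNReal.ofReal_mul (by have := hμ.upper_const_pos; positivity)]
        congr 1; field_simp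
    _ ≤ ENNReal.ofReal (c₂ / b₁) * ν (closedBall x r) := by
        gcongr; exact hν.ofReal_le_measure_closedBall hx hr hr1

end IsDMeasure

theorem stmt_5_general (n : ℕ) (d : ℝ) (hd : 0 < d)
    (F : Set (EuclideanSpace ℝ (Fin n)))
    (μ : Measure (EuclideanSpace ℝ (Fin n))) (c₁ c₂ : ℝ)
    (hμ : IsDMeasure n d F μ c₁ c₂) :
    (∃ C₁ C₂ : ℝ, 0 < C₁ ∧ 0 < C₂ ∧ ∀ x ∈ F, ∀ r : ℝ, 0 < r → r ≤ 1 →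
      ENNReal.ofReal (C₁ * r ^ d) ≤ μH[d] (F ∩ closedBall x r) ∧
        μH[d] (F ∩ closedBall x r) ≤ ENNReal.ofReal (C₂ * r ^ d)) ∧
    (∀ (μ₁ μ₂ : Measure (EuclideanSpace ℝ (Fin n))) (a₁ a₂ b₁ b₂ : ℝ),
      IsDMeasure n d F μ₁ a₁ a₂ → IsDMeasure n d F μ₂ b₁ b₂ →
      ∃ K : ℝ, 0 < K ∧ ∀ x ∈ F, ∀ r : ℝ, 0 < r → r ≤ 1 →
        μ₁ (closedBall x r) ≤ ENNReal.ofReal K * μ₂ (closedBall x r) ∧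
          μ₂ (closedBall x r) ≤ ENNReal.ofReal K * μ₁ (closedBall x r)) := by
  obtain ⟨C₂, hC₂, hupper⟩ := hμ.exists_hausdorffMeasure_inter_closedBall_le hd
  refine ⟨⟨c₁ / c₂, C₂, div_pos hμ.lower_const_pos hμ.upper_const_pos, hC₂,
    fun x hx r hr hr1 => ⟨hμ.le_hausdorffMeasure_inter_closedBall hd hx hr hr1,
      hupper x r hr hr1⟩⟩, fun μ₁ μ₂ a₁ a₂ b₁ b₂ h₁ h₂ => ?_⟩
  refine ⟨max (a₂ / b₁) (b₂ / a₁), lt_max_of_lt_left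
    (div_pos h₁.upper_const_pos h₂.lower_const_pos), fun x hx r hr hr1 => ⟨?_, ?_⟩⟩
  · exact (h₁.measure_closedBall_le_ofReal_div_mul h₂ hx hr hr1).trans
      (by gcongr; exact le_max_left _ _)
  · exact (h₂.measure_closedBall_le_ofReal_div_mul h₁ hx hr hr1).trans
      (by gcongr; exact le_max_right _ _)

/-- If `F ⊆ ℝⁿ` is a `d`-set (carrying some `d`-measure), then the restriction of the
`d`-dimensional Hausdorff measure to `F` is also a `d`-measure on `F`; in particular any two
`d`-measures on `F` are equivalent (mutually bounded by constant multiples on balls). -/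
theorem stmt_5 (n : ℕ) (d : ℝ) (hd : 0 < d) (hdn : d ≤ n)
    (F : Set (EuclideanSpace ℝ (Fin n))) (hFc : IsClosed F) (hFne : F.Nonempty)
    (μ : Measure (EuclideanSpace ℝ (Fin n))) (c₁ c₂ : ℝ)
    (hμ : IsDMeasure n d F μ c₁ c₂) :
    (∃ C₁ C₂ : ℝ, 0 < C₁ ∧ 0 < C₂ ∧ ∀ x ∈ F, ∀ r : ℝ, 0 < r → r ≤ 1 →
      ENNReal.ofReal (C₁ * r ^ d) ≤ μH[d] (F ∩ closedBall x r) ∧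
        μH[d] (F ∩ closedBall x r) ≤ ENNReal.ofReal (C₂ * r ^ d)) ∧
    (∀ (μ₁ μ₂ : Measure (EuclideanSpace ℝ (Fin n))) (a₁ a₂ b₁ b₂ : ℝ),
      IsDMeasure n d F μ₁ a₁ a₂ → IsDMeasure n d F μ₂ b₁ b₂ →
      ∃ K : ℝ, 0 < K ∧ ∀ x ∈ F, ∀ r : ℝ, 0 < r → r ≤ 1 →
        μ₁ (closedBall x r) ≤ ENNReal.ofReal K * μ₂ (closedBall x r) ∧
          μ₂ (closedBall x r) ≤ ENNReal.ofReal K * μ₁ (closedBall x r)) :=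
  stmt_5_general n d hd F μ c₁ c₂ hμ
end

section
/- If Ω ⊂ ℝⁿ is an (ε,∞)-domain (uniform domain), then Ω is an n-set, i.e. there exists c > 0 such that for all x ∈ closure(Ω) and all 0 < r ≤ 1, the Lebesgue measure λ(B(x,r) ∩ Ω) ≥ c rⁿ. -/
open MeasureTheory Metric Set ENNReal

lemma ball_subset_of_infDist_frontier {E : Type*} [NormedAddCommGroup E] [NormedSpace ℝ E]
    {Ω : Set E} (hΩo : IsOpen Ω) {z : E} (hz : z ∈ Ω) {ρ : ℝ}
    (hρ : ρ ≤ infDist z (frontier Ω)) : ball z ρ ⊆ Ω := by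
  rcases le_or_gt ρ 0 with h | h
  · simp [ball_eq_empty.2 h]
  have hdisj : ∀ w ∈ ball z ρ, w ∉ frontier Ω := by
    intro w hw hwf
    have h1 : infDist z (frontier Ω) ≤ dist z w := infDist_le_dist_of_mem hwf
    have h2 : dist w z < ρ := mem_ball.1 hw
    rw [dist_comm] at h2
    linarith
  have hsub : ball z ρ ⊆ Ω ∪ (closure Ω)ᶜ := by
    intro w hw
    by_cases hwc : w ∈ closure Ω
    · left
      have hwi : w ∈ interior Ω := by
        by_contra hwi
        exact hdisj w hw ⟨hwc, hwi⟩
      rwa [hΩo.interior_eq] at hwi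
    · exact Or.inr hwc
  exact (convex_ball z ρ).isPreconnected.subset_left_of_subset_union hΩo
    isClosed_closure.isOpen_compl (disjoint_compl_right.mono_left subset_closure) hsub
    ⟨z, mem_ball_self h, hz⟩

/-- Every `(ε,∞)`-domain (uniform domain) `Ω ⊆ ℝⁿ` is an `n`-set:
`λ(B(x,r) ∩ Ω) ≥ c rⁿ` for every `x ∈ closure Ω` and `0 < r ≤ 1`. -/
theorem stmt_7 (n : ℕ) (Ω : Set (EuclideanSpace ℝ (Fin n)))
    (hΩo : IsOpen Ω) (hΩconn : IsConnected Ω)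
    (ε : ℝ) (hε : 0 < ε)
    (hunif : ∀ x ∈ Ω, ∀ y ∈ Ω, x ≠ y →
      ∃ γ : ℝ → EuclideanSpace ℝ (Fin n),
        ContinuousOn γ (Icc 0 1) ∧ γ 0 = x ∧ γ 1 = y ∧
        (∀ t ∈ Icc (0 : ℝ) 1, γ t ∈ Ω) ∧
        eVariationOn γ (Icc 0 1) ≤ ENNReal.ofReal (dist x y / ε) ∧
        (∀ t ∈ Icc (0 : ℝ) 1,
          ε * dist x (γ t) * dist y (γ t) / dist x y ≤ infDist (γ t) (frontier Ω))) :
    ∃ c : ℝ, 0 < c ∧ ∀ x ∈ closure Ω, ∀ r : ℝ, 0 < r → r ≤ 1 →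
      ENNReal.ofReal (c * r ^ n) ≤ volume (ball x r ∩ Ω) := by
  obtain ⟨p, hp⟩ := hΩconn.nonempty
  obtain ⟨δ, hδ0, hδ⟩ := Metric.isOpen_iff.1 hΩo p hp
  set κ : ℝ := min (min ε 1 / 16) δ with hκdef
  have hmin0 : 0 < min ε 1 := lt_min hε one_pos
  have hκ0 : 0 < κ := lt_min (by positivity) hδ0
  set V : ℝ≥0∞ := volume (ball (0 : EuclideanSpace ℝ (Fin n)) 1) with hVdef
  have hV0 : 0 < V := measure_ball_pos _ _ one_pos
  have hVt : V ≠ ⊤ := measure_ball_lt_top.ne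
  have hVtr : 0 < V.toReal := ENNReal.toReal_pos hV0.ne' hVt
  refine ⟨κ ^ n * V.toReal, by positivity, ?_⟩
  intro x hx r hr hr1
  obtain ⟨z, ρ, hκρ, hsub⟩ : ∃ z ρ, κ * r ≤ ρ ∧ ball z ρ ⊆ ball x r ∩ Ω := by
    obtain ⟨x₁, hx₁Ω, hx₁d⟩ := Metric.mem_closure_iff.1 hx (r/8) (by positivity)
    by_cases hbig : ∃ y ∈ Ω, r/4 ≤ dist x₁ y
    · obtain ⟨y, hyΩ, hy⟩ := hbig
      have hxy : x₁ ≠ y := by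
        intro h; rw [h, dist_self] at hy; linarith
      obtain ⟨γ, hγc, hγ0, hγ1, hγΩ, -, -⟩ := hunif x₁ hx₁Ω y hyΩ hxy
      have hcont : ContinuousOn (fun t => dist x₁ (γ t)) (Icc 0 1) := (continuous_const.dist continuous_id).comp_continuousOn hγc
      have hmem : r/4 ∈ Icc (dist x₁ (γ 0)) (dist x₁ (γ 1)) := by
        rw [hγ0, hγ1, dist_self]; exact ⟨by positivity, hy⟩
      obtain ⟨s, hs, hseq⟩ := intermediate_value_Icc (by norm_num : (0:ℝ) ≤ 1) hcont hmem
      have hy'Ω : γ s ∈ Ω := hγΩ s hs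
      have hdist : dist x₁ (γ s) = r/4 := hseq
      have hxy' : x₁ ≠ γ s := by
        intro h; rw [← h, dist_self] at hdist; linarith
      obtain ⟨γ', hγ'c, hγ'0, hγ'1, hγ'Ω, -, hcig⟩ := hunif x₁ hx₁Ω (γ s) hy'Ω hxy'
      have hcont' : ContinuousOn (fun t => dist x₁ (γ' t)) (Icc 0 1) :=
        (continuous_const.dist continuous_id).comp_continuousOn hγ'c
      have hmem' : r/8 ∈ Icc (dist x₁ (γ' 0)) (dist x₁ (γ' 1)) := by
        rw [hγ'0, hγ'1, dist_self, hdist]; constructor <;> linarith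
      obtain ⟨t, ht, hteq⟩ := intermediate_value_Icc (by norm_num : (0:ℝ) ≤ 1) hcont' hmem'
      have hzΩ : γ' t ∈ Ω := hγ'Ω t ht
      have hd1 : dist x₁ (γ' t) = r/8 := hteq
      have hd2 : r/8 ≤ dist (γ s) (γ' t) := by
        have htr := dist_triangle x₁ (γ' t) (γ s)
        have : dist (γ' t) (γ s) = dist (γ s) (γ' t) := dist_comm _ _
        linarith
      have hinf : ε * r / 16 ≤ infDist (γ' t) (frontier Ω) := by
        have h := hcig t ht
        rw [hdist, hd1] at h
        have heq : ε * (r/8) * dist (γ s) (γ' t) / (r/4) = ε * dist (γ s) (γ' t) / 2 := by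
          field_simp; ring
        rw [heq] at h
        nlinarith
      refine ⟨γ' t, min ε 1 * r / 16, ?_, ?_⟩
      · have h1 : κ ≤ min ε 1 / 16 := min_le_left _ _
        nlinarith
      · intro w hw
        have hwΩ : w ∈ Ω := by
          refine ball_subset_of_infDist_frontier hΩo hzΩ (le_trans ?_ hinf) hw
          have : min ε 1 ≤ ε := min_le_left _ _
          nlinarith
        refine ⟨?_, hwΩ⟩
        rw [mem_ball]
        have hwz : dist w (γ' t) < min ε 1 * r / 16 := mem_ball.1 hw
        have hle1 : min ε 1 ≤ 1 := min_le_right _ _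
        have htr1 : dist w x ≤ dist w (γ' t) + dist (γ' t) x₁ + dist x₁ x := dist_triangle4 _ _ _ _
        have h1 : dist (γ' t) x₁ = r/8 := by rw [dist_comm]; exact hd1
        have h2 : dist x₁ x < r/8 := by rw [dist_comm]; exact hx₁d
        nlinarith
    · push_neg at hbig
      refine ⟨p, δ, ?_, ?_⟩
      · have h1 : κ ≤ δ := min_le_right _ _
        nlinarith
      · intro w hw
        have hwΩ : w ∈ Ω := hδ hw
        refine ⟨?_, hwΩ⟩
        rw [mem_ball]
        have h1 : dist x₁ w < r/4 := hbig w hwΩ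
        have htr : dist w x ≤ dist w x₁ + dist x₁ x := dist_triangle _ _ _
        have h2 : dist x₁ x < r/8 := by rw [dist_comm]; exact hx₁d
        have h3 : dist w x₁ = dist x₁ w := dist_comm _ _
        linarith
  have hρ0 : (0:ℝ) < ρ := lt_of_lt_of_le (by positivity) hκρ
  have hball : volume (ball z ρ) = ENNReal.ofReal (ρ ^ n) * V := by
    rw [hVdef, Measure.addHaar_ball_of_pos volume z hρ0, finrank_euclideanSpace_fin]
  calc ENNReal.ofReal (κ ^ n * V.toReal * r ^ n)
      = ENNReal.ofReal ((κ * r) ^ n) * V := by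
        rw [show κ ^ n * V.toReal * r ^ n = (κ * r) ^ n * V.toReal by rw [mul_pow]; ring,
          ENNReal.ofReal_mul (by positivity), ENNReal.ofReal_toReal hVt]
    _ ≤ ENNReal.ofReal (ρ ^ n) * V := by
        gcongr
    _ = volume (ball z ρ) := hball.symm
    _ ≤ volume (ball x r ∩ Ω) := measure_mono hsub
end

section
/- A sphere S^{n−1} ⊂ ℝⁿ (n ≥ 2) does not preserve Markov's local inequality: there is no constant c > 0 such that for all polynomials P of degree at most 1 and all x ∈ S^{n−1}, 0 < r ≤ 1, one has max over S^{n−1} ∩ closed B(x,r) of |∇P| ≤ (c/r) max over S^{n−1} ∩ closed B(x,r) of |P|. -/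
/-!
Take the affine function `P(y) = y₀ - 1 = ⟪e₀, y⟫ - 1`, whose gradient is the unit vector `e₀`
everywhere. On the sphere, `1 - ⟪e₀, y⟫ = ‖y - e₀‖² / 2`, so on the cap of radius `r` around `e₀`
the function `P` is of size at most `r² / 2`. A local Markov inequality would then give
`1 ≤ (c / r) · r² / 2 = c r / 2`, which fails once `r < 2 / c`.
-/

open Metric Set

/-- Evaluation of a multivariate polynomial as a function on `ℝⁿ`. -/
noncomputable def polyFun (n : ℕ) (P : MvPolynomial (Fin n) ℝ) :
    EuclideanSpace ℝ (Fin n) → ℝ :=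
  fun x => MvPolynomial.eval (fun i => x i) P

open InnerProductSpace
open scoped RealInnerProductSpace

section InnerProductSpace

variable {F : Type*} [NormedAddCommGroup F] [InnerProductSpace ℝ F]

theorem hasGradientAt_inner_sub_const [CompleteSpace F] (u : F) (a : ℝ) (y : F) :
    HasGradientAt (fun z => ⟪u, z⟫ - a) u y := by
  rw [hasGradientAt_iff_hasFDerivAt]
  exact (toDual ℝ F u).hasFDerivAt.sub_const a

theorem one_sub_inner_eq_half_norm_sub_sq {u y : F} (hu : ‖u‖ = 1) (hy : ‖y‖ = 1) :
    1 - ⟪u, y⟫ = ‖y - u‖ ^ 2 / 2 := by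
  rw [norm_sub_sq_real, hu, hy, real_inner_comm]
  ring

theorem abs_inner_sub_one_le_of_mem_sphere_inter_closedBall {u y : F} {r : ℝ} (hu : ‖u‖ = 1)
    (hy : y ∈ sphere 0 1 ∩ closedBall u r) : |⟪u, y⟫ - 1| ≤ r ^ 2 / 2 := by
  obtain ⟨hy_sphere, hy_ball⟩ := hy
  have hdist : ‖y - u‖ ≤ r := by rwa [← dist_eq_norm]
  rw [abs_sub_comm, one_sub_inner_eq_half_norm_sub_sq hu (mem_sphere_zero_iff_norm.1 hy_sphere),
    abs_of_nonneg (by positivity)]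
  gcongr

theorem sSup_abs_inner_sub_one_sphere_inter_closedBall_le {u : F} (hu : ‖u‖ = 1) (r : ℝ) :
    sSup ((fun y => |⟪u, y⟫ - 1|) '' (sphere 0 1 ∩ closedBall u r)) ≤ r ^ 2 / 2 :=
  Real.sSup_le (forall_mem_image.2 fun _ hy =>
    abs_inner_sub_one_le_of_mem_sphere_inter_closedBall hu hy) (by positivity)

end InnerProductSpace

theorem polyFun_X_sub_C_one {n : ℕ} (i : Fin n) :
    polyFun n (MvPolynomial.X i - MvPolynomial.C 1) =
      fun y => ⟪EuclideanSpace.single i 1, y⟫ - 1 := by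
  ext y
  simp [polyFun, EuclideanSpace.inner_single_left]

theorem totalDegree_X_sub_C_le_one {σ R : Type*} [CommRing R] [Nontrivial R] (i : σ) (a : R) :
    (MvPolynomial.X i - MvPolynomial.C a : MvPolynomial σ R).totalDegree ≤ 1 :=
  (MvPolynomial.totalDegree_sub_C_le _ _).trans_eq (MvPolynomial.totalDegree_X i)

/-- The unit sphere `S^{n-1} ⊆ ℝⁿ` (`n ≥ 2`) does not preserve Markov's local inequality,
already for polynomials of degree at most `1`. -/
theorem stmt_9 (n : ℕ) (hn : 2 ≤ n) :
    ¬ ∃ c : ℝ, 0 < c ∧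
      ∀ P : MvPolynomial (Fin n) ℝ, P.totalDegree ≤ 1 →
      ∀ x ∈ sphere (0 : EuclideanSpace ℝ (Fin n)) 1, ∀ r : ℝ, 0 < r → r ≤ 1 →
        sSup ((fun y => ‖gradient (polyFun n P) y‖) ''
            (sphere (0 : EuclideanSpace ℝ (Fin n)) 1 ∩ closedBall x r)) ≤
          (c / r) * sSup ((fun y => |polyFun n P y|) ''
            (sphere (0 : EuclideanSpace ℝ (Fin n)) 1 ∩ closedBall x r)) := by
  rintro ⟨c, hc, H⟩
  set r := min 1 c⁻¹
  have hr : 0 < r := lt_min one_pos (inv_pos.2 hc)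
  have key := H _ (totalDegree_X_sub_C_le_one (⟨0, by omega⟩ : Fin n) 1)
  rw [polyFun_X_sub_C_one] at key
  set u : EuclideanSpace ℝ (Fin n) := EuclideanSpace.single ⟨0, by omega⟩ 1
  have hu : ‖u‖ = 1 := by simp [u]
  have hcap : (sphere 0 1 ∩ closedBall u r).Nonempty :=
    ⟨u, mem_sphere_zero_iff_norm.2 hu, mem_closedBall_self hr.le⟩
  specialize key u (mem_sphere_zero_iff_norm.2 hu) r hr (min_le_left _ _)
  simp only [gradient_eq (hasGradientAt_inner_sub_const u 1), hu, hcap.image_const,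
    csSup_singleton] at key
  have hcr : c * r ≤ 1 := by
    calc c * r ≤ c * c⁻¹ := by gcongr; exact min_le_right _ _
      _ = 1 := mul_inv_cancel₀ hc.ne'
  have hmarkov : (1 : ℝ) ≤ c * r / 2 := by
    calc (1 : ℝ) ≤ c / r * (r ^ 2 / 2) :=
          key.trans (by gcongr; exact sSup_abs_inner_sub_one_sphere_inter_closedBall_le hu r)
      _ = c * r / 2 := by field_simp
  linarith
end
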